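/- Let O be a complete discrete valuation ring with maximal ideal m, residue field of size λ, and let k ≥ 1. Fix a unit D ∈ (O/m^k)^× with v(1-D) = 0. Then the number of matrices g ∈ GL_2(O/m^k) with det(g) = D and det(g - 1) = 0 equals λ^{2k-1}(λ+1). -/

import Mathlib

open scoped Classical

/-- The "reduced valuation" on `O ⧸ m ^ k`. -/
noncomputable def redVal {O : Type*} [CommRing O] (m : Ideal O) (k : ℕ)
    (a : O ⧸ m ^ k) : ℕ :=
  Nat.findGreatest (fun i => a ∈ (m ^ i).map (Ideal.Quotient.mk (m ^ k))) k

/-!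
A matrix `g` with `det g = D` and `det (g - 1) = 0` has trace `1 + D`, so it is determined by
`(a, b, c) = (g 0 0, g 0 1, g 1 0)` subject to `b c = (a - 1) (D - a)`. Over a local ring `R` in
which `D - 1` is a unit, `a - 1` and `D - a` are never both non-units; dividing `b` by `a - 1`,
resp. `c` by `D - a`, identifies the solutions with `{(b, c) | D - 1 - b c unit}` plus
`{(b, c) | b c non-unit}`, and counting units and non-units gives `|R| (|R| + |𝔪_R|)`.
For `R = O ⧸ 𝔪 ^ k` this is `λ ^ k (λ ^ k + λ ^ (k - 1))`.
-/

open IsLocalRing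

theorem Nat.card_subtype_add_card_subtype_not {α : Type*} [Finite α] (p : α → Prop) :
    Nat.card {a // p a} + Nat.card {a // ¬p a} = Nat.card α := by
  rw [← Nat.card_sum, Nat.card_congr (Equiv.sumCompl p)]

section RootQuadric

variable {R : Type*} [CommRing R]

/-- `(a, b, c) ∈ rootQuadric x y` iff `!![a, b; c, x + y - a]` has characteristic polynomial
`(X - x) * (X - y)`. -/
def rootQuadric (x y : R) : Set (R × R × R) :=
  {p | p.2.1 * p.2.2 = (p.1 - x) * (y - p.1)}

theorem Matrix.det_eq_and_det_sub_one_eq_zero_iff (g : Matrix (Fin 2) (Fin 2) R) (D : R) :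
    (g.det = D ∧ (g - 1).det = 0) ↔
      g 1 1 = 1 + D - g 0 0 ∧ g 0 1 * g 1 0 = (g 0 0 - 1) * (D - g 0 0) := by
  simp only [Matrix.det_fin_two, Matrix.sub_apply, Matrix.one_apply_eq,
    Matrix.one_apply_ne zero_ne_one, Matrix.one_apply_ne one_ne_zero, sub_zero]
  constructor
  · rintro ⟨h₁, h₂⟩
    have h : g 1 1 = 1 + D - g 0 0 := by linear_combination h₁ - h₂
    exact ⟨h, by rw [h] at h₁; linear_combination -h₁⟩
  · rintro ⟨h, h'⟩
    rw [h]
    constructor <;> linear_combination -h'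

def matrixEquivRootQuadric (D : R) :
    {g : Matrix (Fin 2) (Fin 2) R | g.det = D ∧ (g - 1).det = 0} ≃ rootQuadric 1 D where
  toFun g := ⟨(g.1 0 0, g.1 0 1, g.1 1 0), ((g.1.det_eq_and_det_sub_one_eq_zero_iff D).1 g.2).2⟩
  invFun p := ⟨!![p.1.1, p.1.2.1; p.1.2.2, 1 + D - p.1.1],
    (Matrix.det_eq_and_det_sub_one_eq_zero_iff _ D).2 ⟨rfl, p.2⟩⟩
  left_inv g := by
    have h := ((g.1.det_eq_and_det_sub_one_eq_zero_iff D).1 g.2).1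
    ext i j
    fin_cases i <;> fin_cases j <;> simp [h]
  right_inv p := rfl

end RootQuadric

def isUnitMulEquiv {M : Type*} [CommMonoid M] :
    {p : M × M // IsUnit (p.1 * p.2)} ≃ {m : M // IsUnit m} × {m : M // IsUnit m} :=
  (Equiv.subtypeEquivRight fun _ ↦ IsUnit.mul_iff).trans Equiv.subtypeProdEquivProd

section LocalRing

variable {R : Type*} [CommRing R] [IsLocalRing R]

theorem IsLocalRing.isUnit_of_isUnit_add_of_not_isUnit {a b : R} (h : IsUnit (a + b))
    (hb : ¬IsUnit b) : IsUnit a :=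
  (isUnit_or_isUnit_of_isUnit_add h).resolve_right hb

noncomputable def rootQuadricUnitEquiv (x y : R) :
    {p : R × R // IsUnit (y - x - p.1 * p.2)} ≃ {q : rootQuadric x y // IsUnit (q.1.1 - x)} :=
  Equiv.ofBijective
    (fun p ↦ ⟨⟨(y - p.1.1 * p.1.2, (y - x - p.1.1 * p.1.2) * p.1.1, p.1.2), by
      simp only [rootQuadric, Set.mem_ofPred_eq]; ring⟩, by convert p.2 using 1; ring⟩) <| by
    refine ⟨?_, ?_⟩
    · rintro ⟨⟨b, c⟩, hbc⟩ ⟨⟨b', c'⟩, _⟩ h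
      simp only [Subtype.mk.injEq, Prod.mk.injEq] at h
      obtain ⟨h₁, h₂, rfl⟩ := h
      obtain rfl : b = b' := hbc.mul_left_cancel (by rw [h₂, sub_right_inj.1 h₁])
      rfl
    · rintro ⟨⟨⟨a, b, c⟩, habc⟩, ha⟩
      have hb : ha.unit⁻¹ * b * c = y - a := by
        simp only [rootQuadric, Set.mem_ofPred_eq] at habc
        rw [mul_assoc, habc, ← mul_assoc, IsUnit.val_inv_mul, one_mul]
      refine ⟨⟨(ha.unit⁻¹ * b, c), by simpa [hb] using ha⟩, ?_⟩
      simp [hb, ← mul_assoc]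

noncomputable def rootQuadricNonunitEquiv {x y : R} (hxy : IsUnit (y - x)) :
    {p : R × R // ¬IsUnit (p.1 * p.2)} ≃ {q : rootQuadric x y // ¬IsUnit (q.1.1 - x)} :=
  Equiv.ofBijective
    (fun p ↦ ⟨⟨(x + p.1.1 * p.1.2, p.1.1, (y - x - p.1.1 * p.1.2) * p.1.2), by
      simp only [rootQuadric, Set.mem_ofPred_eq]; ring⟩, by simpa using p.2⟩) <| by
    refine ⟨?_, ?_⟩
    · rintro ⟨⟨b, c⟩, hbc⟩ ⟨⟨b', c'⟩, _⟩ h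
      simp only [Subtype.mk.injEq, Prod.mk.injEq] at h
      obtain ⟨h₁, rfl, h₃⟩ := h
      have hu : IsUnit (y - x - b * c) :=
        isUnit_of_isUnit_add_of_not_isUnit (by rwa [sub_add_cancel]) hbc
      obtain rfl : c = c' := hu.mul_left_cancel (by rw [h₃, add_left_cancel h₁])
      rfl
    · rintro ⟨⟨⟨a, b, c⟩, habc⟩, ha⟩
      have hu : IsUnit (y - a) :=
        isUnit_of_isUnit_add_of_not_isUnit (by convert hxy using 1; ring) ha
      have hc : b * (hu.unit⁻¹ * c) = a - x := by
        simp only [rootQuadric, Set.mem_ofPred_eq] at habc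
        rw [mul_left_comm, habc, mul_left_comm, IsUnit.val_inv_mul, mul_one]
      refine ⟨⟨(b, hu.unit⁻¹ * c), by simpa [hc] using ha⟩, ?_⟩
      simp [hc, ← mul_assoc]

noncomputable def nonunitSubMulEquiv {d : R} (hd : IsUnit d) :
    {p : R × R // ¬IsUnit (d - p.1 * p.2)} ≃ {r : R // IsUnit r} × {r : R // ¬IsUnit r} :=
  Equiv.ofBijective
    (fun p ↦ (⟨p.1.1, isUnit_of_mul_isUnit_left <|
      isUnit_of_isUnit_add_of_not_isUnit (by rwa [add_sub_cancel]) p.2⟩, ⟨_, p.2⟩)) <| by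
    refine ⟨?_, ?_⟩
    · rintro ⟨⟨b, c⟩, _⟩ ⟨⟨b', c'⟩, _⟩ h
      simp only [Prod.mk.injEq, Subtype.mk.injEq] at h
      obtain ⟨rfl, h⟩ := h
      have hb : IsUnit b := isUnit_of_mul_isUnit_left <|
        isUnit_of_isUnit_add_of_not_isUnit (by rwa [add_sub_cancel]) ‹¬IsUnit (d - b * c)›
      obtain rfl : c = c' := hb.mul_left_cancel (sub_right_inj.1 h)
      rfl
    · rintro ⟨⟨u, hu⟩, ⟨z, hz⟩⟩
      have hc : u * (hu.unit⁻¹ * (d - z)) = d - z := by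
        rw [← mul_assoc, IsUnit.mul_val_inv, one_mul]
      exact ⟨⟨(u, hu.unit⁻¹ * (d - z)), by rwa [hc, sub_sub_cancel]⟩, by simp [hc]⟩

theorem card_rootQuadric {x y : R} (hxy : IsUnit (y - x)) :
    Nat.card (rootQuadric x y) = Nat.card R * (Nat.card R + Nat.card {r : R // ¬IsUnit r}) := by
  rcases finite_or_infinite R with hR | hR
  · have hUN := Nat.card_subtype_add_card_subtype_not (IsUnit (M := R))
    have hA : Nat.card {p : R × R // IsUnit (y - x - p.1 * p.2)} +
        Nat.card {r : R // IsUnit r} * Nat.card {r : R // ¬IsUnit r} =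
          Nat.card R * Nat.card R := by
      rw [← Nat.card_prod, ← Nat.card_congr (nonunitSubMulEquiv hxy),
        Nat.card_subtype_add_card_subtype_not, Nat.card_prod]
    have hB : Nat.card {r : R // IsUnit r} * Nat.card {r : R // IsUnit r} +
        Nat.card {p : R × R // ¬IsUnit (p.1 * p.2)} = Nat.card R * Nat.card R := by
      rw [← Nat.card_prod, ← Nat.card_congr isUnitMulEquiv,
        Nat.card_subtype_add_card_subtype_not, Nat.card_prod]
    have hQ := Nat.card_subtype_add_card_subtype_not fun q : rootQuadric x y ↦ IsUnit (q.1.1 - x)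
    rw [← Nat.card_congr (rootQuadricUnitEquiv x y),
      ← Nat.card_congr (rootQuadricNonunitEquiv hxy)] at hQ
    zify at hUN hA hB hQ ⊢
    linear_combination -hQ + hA + hB - (Nat.card {r : R // IsUnit r} + Nat.card R : ℤ) * hUN
  · -- both sides are `0`, the value of `Nat.card` on infinite types
    have : Infinite (rootQuadric x y) :=
      Infinite.of_injective (fun b ↦ ⟨(x, b, 0), by simp [rootQuadric]⟩) fun b b' h ↦ by
        simpa using congrArg (·.1.2.1) h
    simp [Nat.card_eq_zero_of_infinite]

end LocalRing

theorem card_nonunits_mul_card_of_surjective {R K : Type*} [CommRing R] [IsLocalRing R] [Field K]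
    (f : R →+* K) (hf : Function.Surjective f) :
    Nat.card {r : R // ¬IsUnit r} * Nat.card K = Nat.card R := by
  have : IsLocalHom f := .of_surjective f hf
  have hker : Nat.card {r : R // ¬IsUnit r} = Nat.card (RingHom.ker f) :=
    Nat.card_congr <| Equiv.subtypeEquivRight fun r ↦ by
      rw [← isUnit_map_iff f, isUnit_iff_ne_zero, not_not, RingHom.mem_ker]
  rw [hker, mul_comm, ← (RingHom.ker f).toAddSubgroup.index_mul_card]
  congr 1
  exact (Nat.card_congr (RingHom.quotientKerEquivOfSurjective hf).toEquiv).symm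

theorem isUnit_of_redVal_eq_zero {O : Type*} [CommRing O] [IsLocalRing O] {k : ℕ} (hk : 1 ≤ k)
    {a : O ⧸ maximalIdeal O ^ k} (ha : redVal (maximalIdeal O) k a = 0) : IsUnit a := by
  obtain ⟨b, rfl⟩ := Ideal.Quotient.mk_surjective a
  by_contra hb
  have hmem : b ∈ maximalIdeal O := fun hb' ↦ hb (hb'.map _)
  refine Nat.findGreatest_eq_zero_iff.1 ha one_pos hk ?_
  rw [pow_one]
  exact Ideal.mem_map_of_mem _ hmem

theorem IsDiscreteValuationRing.card_quotient_maximalIdeal_pow {O : Type*} [CommRing O]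
    [IsDomain O] [IsDiscreteValuationRing O] (k : ℕ) :
    Nat.card (O ⧸ IsLocalRing.maximalIdeal O ^ k) =
      Nat.card (O ⧸ IsLocalRing.maximalIdeal O) ^ k := by
  simpa [Submodule.cardQuot_apply] using
    cardQuot_pow_of_prime (P := IsLocalRing.maximalIdeal O) (not_a_field O) (i := k)

theorem stmt_2_general {O : Type*} [CommRing O] [IsDomain O] [IsDiscreteValuationRing O]
    (lam : ℕ) (hlam : Nat.card (O ⧸ IsLocalRing.maximalIdeal O) = lam)
    (k : ℕ) (hk : 1 ≤ k)
    (D : O ⧸ (IsLocalRing.maximalIdeal O) ^ k)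
    (hD1 : redVal (IsLocalRing.maximalIdeal O) k (1 - D) = 0) :
    Nat.card {g : Matrix (Fin 2) (Fin 2) (O ⧸ (IsLocalRing.maximalIdeal O) ^ k) |
        g.det = D ∧ (g - 1).det = 0} = lam ^ (2 * k - 1) * (lam + 1) := by
  have hle : maximalIdeal O ^ k ≤ maximalIdeal O := Ideal.pow_le_self (by omega)
  have : Nontrivial (O ⧸ maximalIdeal O ^ k) :=
    Ideal.Quotient.nontrivial_iff.2 (ne_top_of_le_ne_top (maximalIdeal.isMaximal O).ne_top hle)
  have : IsLocalRing (O ⧸ maximalIdeal O ^ k) := .of_surjective' _ Ideal.Quotient.mk_surjective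
  have hunit : IsUnit (D - 1) := by simpa using (isUnit_of_redVal_eq_zero hk hD1).neg
  let _ : Field (O ⧸ maximalIdeal O) := Ideal.Quotient.field _
  have hN := card_nonunits_mul_card_of_surjective _ (Ideal.Quotient.factor_surjective hle)
  rw [Nat.card_congr (matrixEquivRootQuadric D), card_rootQuadric hunit]
  rw [IsDiscreteValuationRing.card_quotient_maximalIdeal_pow, hlam] at hN ⊢
  obtain ⟨j, rfl⟩ : ∃ j, k = j + 1 := ⟨k - 1, by omega⟩
  rw [show 2 * (j + 1) - 1 = 2 * j + 1 by omega]
  linear_combination lam ^ j * hN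

theorem stmt_2 {O : Type*} [CommRing O] [IsDomain O] [IsDiscreteValuationRing O]
    [IsAdicComplete (IsLocalRing.maximalIdeal O) O]
    (lam : ℕ) (hlam : Nat.card (O ⧸ IsLocalRing.maximalIdeal O) = lam)
    (k : ℕ) (hk : 1 ≤ k)
    (D : O ⧸ (IsLocalRing.maximalIdeal O) ^ k) (hD : IsUnit D)
    (hD1 : redVal (IsLocalRing.maximalIdeal O) k (1 - D) = 0) :
    Nat.card {g : Matrix (Fin 2) (Fin 2) (O ⧸ (IsLocalRing.maximalIdeal O) ^ k) |
        g.det = D ∧ (g - 1).det = 0} = lam ^ (2 * k - 1) * (lam + 1) :=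
  stmt_2_general lam hlam k hk D hD1
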